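/- The number of regular endotrees of size n equals the n-th Fubini number (the number of ordered set partitions of [n]). -/

import Mathlib

inductive LTree where
  | nil : LTree
  | node : LTree → ℕ → LTree → LTree
deriving DecidableEq

namespace LTree

def size : LTree → ℕ
  | nil => 0
  | node L _ R => L.size + 1 + R.size

/-- The in-order sequence of labels. -/
def inorder : LTree → List ℕ
  | nil => []
  | node L r R => L.inorder ++ r :: R.inorder

/-- The maximum label (0 for the empty tree). -/
def maxL : LTree → ℕ
  | nil => 0
  | node L r R => max r (max L.maxL R.maxL)

/-- Weakly decreasing along every root-to-leaf path. -/
def Decreasing : LTree → Prop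
  | nil => True
  | node L r R => L.maxL ≤ r ∧ R.maxL ≤ r ∧ L.Decreasing ∧ R.Decreasing

/-- Strictly decreasing to the left: every label in a left subtree
is strictly smaller than the label of its parent. -/
def StrictLeft : LTree → Prop
  | nil => True
  | node L r R => L.maxL < r ∧ L.StrictLeft ∧ R.StrictLeft

/-- An endotree: decreasing, strictly decreasing to the left, labels in `[n]`. -/
def IsEndotree (T : LTree) : Prop :=
  T.Decreasing ∧ T.StrictLeft ∧ ∀ l ∈ T.inorder, 1 ≤ l ∧ l ≤ T.size

/-- A regular endotree: the set of labels equals `[k]` for some `k ≤ n`. -/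
def IsRegularEndotree (T : LTree) : Prop :=
  T.IsEndotree ∧ ∃ k ≤ T.size, ∀ l, l ∈ T.inorder ↔ (1 ≤ l ∧ l ≤ k)

end LTree

/-- An endofunction on `[n]`, identified with a word of length `n` over `[n]`. -/
def IsEndofun (x : List ℕ) : Prop := ∀ a ∈ x, 1 ≤ a ∧ a ≤ x.length

/-- A Cayley permutation: an endofunction whose image is `[k]` for some `k ≤ n`. -/
def IsCayley (x : List ℕ) : Prop :=
  IsEndofun x ∧ ∃ k ≤ x.length, ∀ j, j ∈ x ↔ (1 ≤ j ∧ j ≤ k)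

/-- A ballot (ordered set partition) of `[n]`: a list of nonempty pairwise
disjoint blocks covering `Fin n`. -/
def IsBallot (n : ℕ) (l : List (Finset (Fin n))) : Prop :=
  (∀ B ∈ l, B ≠ ∅) ∧ l.Pairwise Disjoint ∧ ∀ i : Fin n, ∃ B ∈ l, i ∈ B


namespace EndoAux
open List

def maxList (w : List ℕ) : ℕ := w.foldr max 0

@[simp] lemma maxList_nil : maxList [] = 0 := rfl
@[simp] lemma maxList_cons (a : ℕ) (w : List ℕ) : maxList (a :: w) = max a (maxList w) := rfl

lemma le_maxList {a : ℕ} {w : List ℕ} (h : a ∈ w) : a ≤ maxList w := by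
  induction w with
  | nil => simp at h
  | cons b t ih =>
    rcases List.mem_cons.1 h with h | h
    · simp [h]
    · have := ih h; simp; omega

lemma maxList_le {w : List ℕ} {c : ℕ} (h : ∀ a ∈ w, a ≤ c) : maxList w ≤ c := by
  induction w with
  | nil => simp
  | cons b t ih =>
    simp only [maxList_cons, max_le_iff]
    exact ⟨h b (by simp), ih fun a ha => h a (by simp [ha])⟩

lemma maxList_lt {w : List ℕ} {c : ℕ} (hc : 0 < c) (h : ∀ a ∈ w, a < c) : maxList w < c := by
  induction w with
  | nil => simpa
  | cons b t ih =>
    simp only [maxList_cons, max_lt_iff]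
    exact ⟨h b (by simp), ih fun a ha => h a (by simp [ha])⟩

lemma maxList_mem {w : List ℕ} (h : w ≠ []) : maxList w ∈ w := by
  induction w with
  | nil => simp at h
  | cons b t ih =>
    rcases eq_or_ne t [] with rfl | ht
    · simp [maxList]
    · rcases le_total (maxList t) b with hle | hle
      · simp [max_eq_left hle]
      · rw [maxList_cons, max_eq_right hle]
        exact List.mem_cons_of_mem _ (ih ht)

lemma maxList_append (u v : List ℕ) : maxList (u ++ v) = max (maxList u) (maxList v) := by
  induction u with
  | nil => simp
  | cons b t ih => simp [ih, max_assoc]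

def treeOf (w : List ℕ) : LTree :=
  if h : w = [] then .nil
  else
    .node (treeOf (w.take (w.idxOf (maxList w)))) (maxList w)
          (treeOf (w.drop (w.idxOf (maxList w) + 1)))
termination_by w.length
decreasing_by
  · have hm : maxList w ∈ w := maxList_mem h
    have hi : w.idxOf (maxList w) < w.length := List.idxOf_lt_length_iff.2 hm
    simpa using hi
  · have : 0 < w.length := List.length_pos_iff.2 h
    simp; omega

lemma treeOf_nil : treeOf [] = .nil := by rw [treeOf]; simp

lemma size_inorder (T : LTree) : T.size = T.inorder.length := by
  induction T with
  | nil => rfl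
  | node L r R ihL ihR => simp [LTree.size, LTree.inorder, ihL, ihR]; omega

lemma maxL_inorder (T : LTree) : T.maxL = maxList T.inorder := by
  induction T with
  | nil => rfl
  | node L r R ihL ihR =>
    simp only [LTree.maxL, LTree.inorder, maxList_append, maxList_cons, ihL, ihR]
    omega

lemma inorder_treeOf (w : List ℕ) : (treeOf w).inorder = w := by
  induction w using treeOf.induct with
  | case1 => simp [treeOf_nil, LTree.inorder]
  | case2 w h ihL ihR =>
    have hm : maxList w ∈ w := maxList_mem h
    have hi : w.idxOf (maxList w) < w.length := List.idxOf_lt_length_iff.2 hm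
    rw [treeOf, dif_neg h]
    simp only [LTree.inorder, ihL, ihR]
    conv_rhs => rw [← List.take_append_drop (w.idxOf (maxList w)) w]
    rw [List.drop_eq_getElem_cons hi, List.getElem_idxOf hi]

lemma not_mem_take_indexOf (w : List ℕ) (M : ℕ) : M ∉ w.take (w.idxOf M) := by
  induction w with
  | nil => simp
  | cons b t ih =>
    by_cases hb : b = M
    · subst hb; simp [List.idxOf_cons_self]
    · rw [List.idxOf_cons_ne _ (by exact hb)]
      simp only [List.take_succ_cons, List.mem_cons, not_or]
      exact ⟨fun hh => hb hh.symm, ih⟩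

lemma treeOf_decreasing (w : List ℕ) : (treeOf w).Decreasing := by
  induction w using treeOf.induct with
  | case1 => simp [treeOf_nil, LTree.Decreasing]
  | case2 w h ihL ihR =>
    rw [treeOf, dif_neg h]
    refine ⟨?_, ?_, ihL, ihR⟩
    · rw [maxL_inorder, inorder_treeOf]
      exact maxList_le fun a ha => le_maxList (List.take_subset _ _ ha)
    · rw [maxL_inorder, inorder_treeOf]
      exact maxList_le fun a ha => le_maxList (List.drop_subset _ _ ha)

lemma treeOf_strictLeft (w : List ℕ) (hpos : ∀ a ∈ w, 1 ≤ a) : (treeOf w).StrictLeft := by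
  induction w using treeOf.induct with
  | case1 => simp [treeOf_nil, LTree.StrictLeft]
  | case2 w h ihL ihR =>
    have hm : maxList w ∈ w := maxList_mem h
    rw [treeOf, dif_neg h]
    refine ⟨?_, ihL fun a ha => hpos a (List.take_subset _ _ ha),
        ihR fun a ha => hpos a (List.drop_subset _ _ ha)⟩
    rw [maxL_inorder, inorder_treeOf]
    refine maxList_lt (hpos _ hm) fun a ha => ?_
    have h1 : a ≤ maxList w := le_maxList (List.take_subset _ _ ha)
    have h2 : a ≠ maxList w := fun hh => not_mem_take_indexOf w (maxList w) (hh ▸ ha)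
    omega

lemma treeOf_inorder (T : LTree) (hd : T.Decreasing) (hs : T.StrictLeft) :
    treeOf T.inorder = T := by
  induction T with
  | nil => exact treeOf_nil
  | node L r R ihL ihR =>
    obtain ⟨hdL, hdR, hdL', hdR'⟩ := hd
    obtain ⟨hsL, hsL', hsR'⟩ := hs
    have hne : (LTree.node L r R).inorder ≠ [] := by
      simp [LTree.inorder]
    have hmax : maxList (LTree.node L r R).inorder = r := by
      rw [← maxL_inorder]
      simp only [LTree.maxL]
      omega
    have hrL : r ∉ L.inorder := fun hmem => by
      have : r ≤ L.maxL := by rw [maxL_inorder]; exact le_maxList hmem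
      omega
    have hidx : (LTree.node L r R).inorder.idxOf r = L.inorder.length := by
      simp only [LTree.inorder]
      rw [List.idxOf_append_of_notMem hrL, List.idxOf_cons_self]; omega
    rw [treeOf, dif_neg hne, hmax, hidx]
    simp only [LTree.inorder]
    rw [List.take_left, show L.inorder.length + 1 = (L.inorder ++ [r]).length by simp,
      show L.inorder ++ r :: R.inorder = (L.inorder ++ [r]) ++ R.inorder by simp,
      List.drop_left]
    rw [ihL hdL' hsL', ihR hdR' hsR']

end EndoAux

namespace EndoAux
open List

lemma ncard_trees_eq_cayley (n : ℕ) :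
    {T : LTree | T.IsRegularEndotree ∧ T.size = n}.ncard =
      {x : List ℕ | IsCayley x ∧ x.length = n}.ncard := by
  have himg : LTree.inorder '' {T : LTree | T.IsRegularEndotree ∧ T.size = n} =
      {x : List ℕ | IsCayley x ∧ x.length = n} := by
    ext x
    constructor
    · rintro ⟨T, ⟨⟨⟨hd, hs, hlab⟩, k, hk, hkiff⟩, hsize⟩, rfl⟩
      have hlen : T.inorder.length = n := by rw [← size_inorder]; exact hsize
      refine ⟨⟨fun a ha => ?_, k, ?_, hkiff⟩, hlen⟩
      · have := hlab a ha; rw [size_inorder] at this; exact this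
      · rw [← size_inorder] at *; exact hk
    · rintro ⟨⟨hendo, k, hk, hkiff⟩, hlen⟩
      have hpos : ∀ a ∈ x, 1 ≤ a := fun a ha => (hendo a ha).1
      have hio : (treeOf x).inorder = x := inorder_treeOf x
      have hsz : (treeOf x).size = n := by rw [size_inorder, hio, hlen]
      refine ⟨treeOf x, ⟨⟨⟨treeOf_decreasing x, treeOf_strictLeft x hpos, ?_⟩, k, ?_, ?_⟩, hsz⟩, hio⟩
      · intro a ha
        rw [hio] at ha
        have := hendo a ha
        rw [size_inorder, hio]; exact this
      · rw [size_inorder, hio]; exact hk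
      · intro j; rw [hio]; exact hkiff j
  rw [← himg, Set.ncard_image_of_injOn]
  intro T1 h1 T2 h2 heq
  have := congrArg treeOf heq
  rwa [treeOf_inorder _ h1.1.1.1 h1.1.1.2.1, treeOf_inorder _ h2.1.1.1 h2.1.1.2.1] at this

/-! ### Cayley words and ballots -/

def blocks (n : ℕ) (x : List ℕ) : List (Finset (Fin n)) :=
  (List.range (maxList x)).map
    (fun j => Finset.univ.filter (fun i : Fin n => x.getD i.val 0 = j + 1))

lemma maxList_eq_k {x : List ℕ} {k : ℕ} (hk : ∀ j, j ∈ x ↔ (1 ≤ j ∧ j ≤ k)) :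
    maxList x = k := by
  rcases Nat.eq_zero_or_pos k with rfl | hpos
  · have : x = [] := by
      cases x with
      | nil => rfl
      | cons a t => exact absurd ((hk a).1 (by simp)) (by omega)
    simp [this]
  · have h1 : maxList x ≤ k := maxList_le fun a ha => ((hk a).1 ha).2
    have h2 : k ≤ maxList x := le_maxList ((hk k).2 ⟨hpos, le_refl k⟩)
    omega

lemma blocks_isBallot {n : ℕ} {x : List ℕ} (hx : IsCayley x) (hlen : x.length = n) :
    IsBallot n (blocks n x) := by
  obtain ⟨hend, k, hkle, hkiff⟩ := hx
  have hmax : maxList x = k := maxList_eq_k hkiff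
  refine ⟨?_, ?_, ?_⟩
  · intro B hB
    simp only [blocks, List.mem_map, List.mem_range, hmax] at hB
    obtain ⟨j, hj, rfl⟩ := hB
    have hmem : j + 1 ∈ x := (hkiff (j + 1)).2 ⟨by omega, by omega⟩
    obtain ⟨m, hm, hgm⟩ := List.getElem_of_mem hmem
    refine Finset.Nonempty.ne_empty ⟨⟨m, by omega⟩, ?_⟩
    simp only [Finset.mem_filter, Finset.mem_univ, true_and]
    rw [List.getD_eq_getElem _ _ (by simpa using hm)]
    exact hgm
  · rw [blocks, List.pairwise_map]
    refine List.pairwise_lt_range.imp ?_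
    intro a b hab
    rw [Finset.disjoint_left]
    intro i hi hi'
    simp only [Finset.mem_filter, Finset.mem_univ, true_and] at hi hi'
    omega
  · intro i
    have hi : (i : ℕ) < x.length := by omega
    have hmem : x[(i : ℕ)] ∈ x := List.getElem_mem hi
    have hb := (hkiff _).1 hmem
    refine ⟨_, List.mem_map.2 ⟨x[(i : ℕ)] - 1, List.mem_range.2 (by omega), rfl⟩, ?_⟩
    simp only [Finset.mem_filter, Finset.mem_univ, true_and]
    rw [List.getD_eq_getElem _ _ hi]
    omega

lemma blocks_length {n : ℕ} (x : List ℕ) : (blocks n x).length = maxList x := by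
  simp [blocks]

lemma blocks_injOn (n : ℕ) :
    Set.InjOn (blocks n) {x : List ℕ | IsCayley x ∧ x.length = n} := by
  rintro x ⟨⟨hend, k, hkle, hkiff⟩, hlen⟩ x' ⟨⟨hend', k', hkle', hkiff'⟩, hlen'⟩ heq
  have hmax : maxList x = k := maxList_eq_k hkiff
  have hmax' : maxList x' = k' := maxList_eq_k hkiff'
  have hkk : k = k' := by
    have := congrArg List.length heq
    rwa [blocks_length, blocks_length, hmax, hmax'] at this
  refine List.ext_getElem (by omega) ?_
  intro m hm hm'
  have ha := hend _ (List.getElem_mem hm)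
  set a := x[m] with hadef
  have hak : a ≤ k := ((hkiff a).1 (List.getElem_mem hm)).2
  have h1 : a - 1 < (blocks n x).length := by rw [blocks_length, hmax]; omega
  have h2 : a - 1 < (blocks n x').length := by rw [blocks_length, hmax']; omega
  have hbe : (blocks n x)[a - 1]'h1 = (blocks n x')[a - 1]'h2 := by
    have := congrArg (fun L => L[a - 1]?) heq
    simp only [List.getElem?_eq_getElem h1, List.getElem?_eq_getElem h2] at this
    exact Option.some.inj this
  have hmn : m < n := by omega
  have hix : (⟨m, hmn⟩ : Fin n) ∈ (blocks n x)[a - 1]'h1 := by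
    simp only [blocks, List.getElem_map, List.getElem_range, Finset.mem_filter,
      Finset.mem_univ, true_and]
    rw [List.getD_eq_getElem _ _ (by omega : m < x.length)]
    omega
  rw [hbe] at hix
  simp only [blocks, List.getElem_map, List.getElem_range, Finset.mem_filter,
    Finset.mem_univ, true_and] at hix
  rw [List.getD_eq_getElem _ _ (by omega : m < x'.length)] at hix
  omega

def wordOf (n : ℕ) (l : List (Finset (Fin n))) : List ℕ :=
  (List.finRange n).map (fun i => l.findIdx (fun B => decide (i ∈ B)) + 1)

lemma findIdx_eq_iff_mem {n : ℕ} {l : List (Finset (Fin n))} (hl : l.Pairwise _root_.Disjoint)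
    (i : Fin n) {j : ℕ} (hj : j < l.length) :
    l.findIdx (fun B => decide (i ∈ B)) = j ↔ i ∈ l[j] := by
  rw [List.findIdx_eq hj]
  constructor
  · rintro ⟨h1, _⟩; simpa using h1
  · intro hij
    refine ⟨by simpa using hij, fun m hm => ?_⟩
    simp only [decide_eq_false_iff_not]
    intro hin
    have hd : Disjoint (l[m]'(by omega)) l[j] :=
      List.pairwise_iff_getElem.1 hl m j (by omega) hj hm
    exact (Finset.disjoint_left.1 hd hin) hij

lemma ballot_length_le {n : ℕ} {l : List (Finset (Fin n))} (hl : IsBallot n l) :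
    l.length ≤ n := by
  obtain ⟨hne, hdisj, _⟩ := hl
  have hex : ∀ j : Fin l.length, ∃ i : Fin n, i ∈ l[(j : ℕ)] := by
    intro j
    exact Finset.nonempty_iff_ne_empty.2 (hne _ (List.getElem_mem j.isLt))
  choose f hf using hex
  have hinj : Function.Injective f := by
    intro a b hab
    rcases Nat.lt_trichotomy a.val b.val with h | h | h
    · have hd : Disjoint (l[(a : ℕ)]'a.isLt) (l[(b : ℕ)]'b.isLt) :=
        List.pairwise_iff_getElem.1 hdisj _ _ a.isLt b.isLt h
      exact absurd (hf b) (Finset.disjoint_left.1 hd (hab ▸ hf a))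
    · exact Fin.ext h
    · have hd : Disjoint (l[(b : ℕ)]'b.isLt) (l[(a : ℕ)]'a.isLt) :=
        List.pairwise_iff_getElem.1 hdisj _ _ b.isLt a.isLt h
      exact absurd (hf a) (Finset.disjoint_left.1 hd (hab ▸ hf b))
  simpa using Fintype.card_le_of_injective f hinj

lemma wordOf_length {n : ℕ} (l : List (Finset (Fin n))) : (wordOf n l).length = n := by
  simp [wordOf]

lemma wordOf_getElem {n : ℕ} (l : List (Finset (Fin n))) {m : ℕ} (hm : m < n) :
    (wordOf n l)[m]'(by simp [wordOf_length]; omega) =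
      l.findIdx (fun B => decide ((⟨m, hm⟩ : Fin n) ∈ B)) + 1 := by
  simp [wordOf]

lemma wordOf_isCayley {n : ℕ} {l : List (Finset (Fin n))} (hl : IsBallot n l) :
    IsCayley (wordOf n l) := by
  obtain ⟨hne, hdisj, hcov⟩ := hl
  have hlle : l.length ≤ n := ballot_length_le ⟨hne, hdisj, hcov⟩
  have hfidx : ∀ i : Fin n, l.findIdx (fun B => decide (i ∈ B)) < l.length := by
    intro i
    obtain ⟨B, hB, hiB⟩ := hcov i
    exact List.findIdx_lt_length_of_exists ⟨B, hB, by simpa using hiB⟩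
  have hmem : ∀ a, a ∈ wordOf n l ↔
      ∃ i : Fin n, l.findIdx (fun B => decide (i ∈ B)) + 1 = a := by
    intro a
    simp [wordOf, List.mem_map]
  constructor
  · intro a ha
    obtain ⟨i, hi⟩ := (hmem a).1 ha
    have := hfidx i
    rw [wordOf_length]
    omega
  · refine ⟨l.length, by rw [wordOf_length]; exact hlle, ?_⟩
    intro j
    rw [hmem]
    constructor
    · rintro ⟨i, rfl⟩
      have := hfidx i
      omega
    · rintro ⟨hj1, hj2⟩
      have hjl : j - 1 < l.length := by omega
      obtain ⟨i, hi⟩ := Finset.nonempty_iff_ne_empty.2 (hne _ (List.getElem_mem hjl))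
      refine ⟨i, ?_⟩
      have := (findIdx_eq_iff_mem hdisj i hjl).2 hi
      omega

lemma maxList_wordOf {n : ℕ} {l : List (Finset (Fin n))} (hl : IsBallot n l) :
    maxList (wordOf n l) = l.length := by
  obtain ⟨hne, hdisj, hcov⟩ := hl
  have hfidx : ∀ i : Fin n, l.findIdx (fun B => decide (i ∈ B)) < l.length := by
    intro i
    obtain ⟨B, hB, hiB⟩ := hcov i
    exact List.findIdx_lt_length_of_exists ⟨B, hB, by simpa using hiB⟩
  have hle : maxList (wordOf n l) ≤ l.length := by
    apply maxList_le
    intro a ha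
    simp only [wordOf, List.mem_map] at ha
    obtain ⟨i, _, rfl⟩ := ha
    have := hfidx i; omega
  rcases Nat.eq_zero_or_pos l.length with h0 | hpos
  · omega
  · have hjl : l.length - 1 < l.length := by omega
    obtain ⟨i, hi⟩ := Finset.nonempty_iff_ne_empty.2 (hne _ (List.getElem_mem hjl))
    have hf : l.findIdx (fun B => decide (i ∈ B)) = l.length - 1 :=
      (findIdx_eq_iff_mem hdisj i hjl).2 hi
    have hmem : l.length ∈ wordOf n l := by
      simp only [wordOf, List.mem_map]
      exact ⟨i, List.mem_finRange i, by omega⟩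
    have := le_maxList hmem
    omega

lemma blocks_wordOf {n : ℕ} {l : List (Finset (Fin n))} (hl : IsBallot n l) :
    blocks n (wordOf n l) = l := by
  obtain ⟨hne, hdisj, hcov⟩ := hl
  have hmax := maxList_wordOf ⟨hne, hdisj, hcov⟩
  refine List.ext_getElem (by rw [blocks_length, hmax]) ?_
  intro j hj hj'
  rw [blocks_length, hmax] at hj
  simp only [blocks, List.getElem_map, List.getElem_range]
  ext i
  simp only [Finset.mem_filter, Finset.mem_univ, true_and]
  have hin : (i : ℕ) < (wordOf n l).length := by rw [wordOf_length]; exact i.isLt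
  rw [List.getD_eq_getElem _ _ hin]
  simp only [wordOf, List.getElem_map, List.getElem_finRange, Fin.cast_mk, Fin.eta]
  rw [show (l.findIdx (fun B => decide (i ∈ B)) + 1 = j + 1) ↔
      (l.findIdx (fun B => decide (i ∈ B)) = j) by omega]
  exact findIdx_eq_iff_mem hdisj i hj'

lemma ncard_cayley_eq_ballot (n : ℕ) :
    {x : List ℕ | IsCayley x ∧ x.length = n}.ncard =
      {l : List (Finset (Fin n)) | IsBallot n l}.ncard := by
  have himg : blocks n '' {x : List ℕ | IsCayley x ∧ x.length = n} =
      {l : List (Finset (Fin n)) | IsBallot n l} := by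
    ext l
    constructor
    · rintro ⟨x, ⟨hx, hlen⟩, rfl⟩
      exact blocks_isBallot hx hlen
    · intro hl
      exact ⟨wordOf n l, ⟨wordOf_isCayley hl, wordOf_length l⟩, blocks_wordOf hl⟩
  rw [← himg, Set.ncard_image_of_injOn (blocks_injOn n)]

end EndoAux

/-- the number of regular endotrees of size `n` equals the `n`-th
Fubini number, i.e. the number of ordered set partitions of `[n]`. -/
theorem card_regularEndotrees (n : ℕ) :
    {T : LTree | T.IsRegularEndotree ∧ T.size = n}.ncard =
      {l : List (Finset (Fin n)) | IsBallot n l}.ncard := by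
  rw [EndoAux.ncard_trees_eq_cayley, EndoAux.ncard_cayley_eq_ballot]
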